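/- arXiv:2503.17541 — 2 statements merged into one kernel-verified Lean document; each statement's English description precedes it below -/
import Mathlib

section
/- Let S = A[y] where A = k[x_1,…,x_{n-1}] is a positively Z-graded polynomial ring and deg(y) = d satisfies d ≥ deg(x_i) for all i. Fix e > 0 and set N = ⌈e/d⌉. Then the truncation decomposes as a sum of S-submodules: S_{≥e} = A_{≥e} + A_{≥e−d}·(y) + A_{≥e−2d}·(y²) + ⋯ + A_{≥e−(N−1)d}·(y^{N−1}) + (y^N), where A_{≥e−di}·(y^i) denotes the S-submodule generated by products of elements of A of degree ≥ e−di with y^i. -/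
/-!
Background setup.  `MvPolynomial (Fin n) k` is the polynomial ring `S = k[x_1, …, x_n]`
over the field `k`, graded (possibly nonstandardly) by weights `w : Fin n → ℤ` with
`0 < w i`, with graded maximal ideal `m = maxIdeal k n = (x_1, …, x_n)`.

* `trunc k n w e` is the truncation `S_{≥e} = ⊕_{i ≥ e} S_i`, an `S`-submodule of `S`
  (realized as the `S`-span of the weighted-homogeneous elements of weighted degree `≥ e`;
  for positive weights this span is exactly `⊕_{i ≥ e} S_i`).
* `GrRing k n` is the associated graded ring `gr_m(S) = ⊕_{i≥0} m^i/m^{i+1}`, realized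
  as the quotient `Rees(m) ⧸ m·Rees(m)` of the Rees algebra of `m`; it is a standard
  graded polynomial ring over `k = S/m`.
* `GrMod k n M` is the associated graded module `gr_m(M) = ⊕_{i≥0} m^i M/m^{i+1} M` of an
  `S`-module `M`, realized as the quotient of the Rees module `⊕_i m^i M` by
  `m·(⊕_i m^i M)`; it is a module over `gr_m(S) = GrRing k n`.
* `grDeg1 k n` is the degree-one component `m/m²` of `gr_m(S)`, i.e. the set of linear
  forms of the standard graded ring `gr_m(S)`.
* `HasLinearResolution R Lin N` says that `N` admits a free resolution
  `⋯ → F_{i+1} → F_i → ⋯ → F_0 → N → 0` in which every differential is given by a matrix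
  all of whose entries lie in the set `Lin` of linear forms.  For a module generated in
  degree `0` over a standard graded `k`-algebra `R` (with `Lin = R_1`) this is the usual
  notion of a linear resolution: a graded free resolution `F_•` with `F_i` generated in
  degree `i`.
-/

set_option synthInstance.maxHeartbeats 1000000
set_option maxHeartbeats 1000000

noncomputable section
open MvPolynomial

/-- The graded maximal ideal `m = (x_1, …, x_n)` of `S = k[x_1, …, x_n]`. -/
def maxIdeal (k : Type) [Field k] (n : ℕ) : Ideal (MvPolynomial (Fin n) k) :=
  Ideal.span (Set.range MvPolynomial.X)

/-- The truncation `S_{≥e} = ⊕_{i ≥ e} S_i` of the `ℤ`-graded polynomial ring `S` with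
weights `w`. -/
def trunc (k : Type) [Field k] (n : ℕ) (w : Fin n → ℤ) (e : ℤ) :
    Submodule (MvPolynomial (Fin n) k) (MvPolynomial (Fin n) k) :=
  Submodule.span _ (⋃ (d : ℤ) (_ : e ≤ d),
    (MvPolynomial.weightedHomogeneousSubmodule k w d : Set (MvPolynomial (Fin n) k)))

/-- The ideal `m·Rees(m)` of the Rees algebra `Rees(m)`; the quotient by it is `gr_m(S)`. -/
def grIdeal (k : Type) [Field k] (n : ℕ) : Ideal ↥(reesAlgebra (maxIdeal k n)) :=
  (maxIdeal k n).map (algebraMap (MvPolynomial (Fin n) k) ↥(reesAlgebra (maxIdeal k n)))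

/-- The associated graded ring `gr_m(S) = ⊕_{i≥0} m^i/m^{i+1} = Rees(m)/m·Rees(m)`. -/
abbrev GrRing (k : Type) [Field k] (n : ℕ) : Type :=
  ↥(reesAlgebra (maxIdeal k n)) ⧸ grIdeal k n

variable (k : Type) [Field k] (n : ℕ) (M : Type) [AddCommGroup M]
  [Module (MvPolynomial (Fin n) k) M]

/-- The Rees module `⊕_i m^i M` of an `S`-module `M`, a module over the Rees algebra. -/
def ReesMod : Type :=
  ↥(((maxIdeal k n).stableFiltration (⊤ : Submodule (MvPolynomial (Fin n) k) M)).submodule)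

instance : AddCommGroup (ReesMod k n M) := by unfold ReesMod; infer_instance
instance : Module ↥(reesAlgebra (maxIdeal k n)) (ReesMod k n M) := by
  unfold ReesMod; infer_instance

/-- The associated graded module `gr_m(M) = ⊕_{i≥0} m^i M/m^{i+1} M`, realized as the
quotient of the Rees module `⊕_i m^i M` by `m·(⊕_i m^i M)`; a `gr_m(S)`-module. -/
def GrMod : Type :=
  ReesMod k n M ⧸
    ((grIdeal k n) • (⊤ : Submodule ↥(reesAlgebra (maxIdeal k n)) (ReesMod k n M)))

instance : AddCommGroup (GrMod k n M) := by unfold GrMod; infer_instance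
instance : Module (GrRing k n) (GrMod k n M) := by unfold GrMod; infer_instance

/-- The degree-one component `m/m²` of `gr_m(S)`: the set of (classes of) the degree-one
elements `s·t` (`s ∈ m`) of the Rees algebra, i.e. the linear forms of `gr_m(S)`. -/
def grDeg1 : Set (GrRing k n) :=
  {g | ∃ s, ∃ hs : s ∈ maxIdeal k n, g = Ideal.Quotient.mk (grIdeal k n)
      ⟨Polynomial.monomial 1 s, reesAlgebra.monomial_mem.mpr (by simpa using hs)⟩}

/-- `N` has a **linear resolution** over `R` with respect to the set `Lin ⊆ R` of linear
forms (the degree-one component of the standard graded algebra `R`): there is a free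
resolution `⋯ → F_{i+1} → F_i → ⋯ → F_0 → N → 0` in which every differential is given by
a matrix with all entries in `Lin`.  For `N` generated in degree `0` this is the usual
notion of a linear resolution (`F_i` generated in degree `i`). -/
def HasLinearResolution (R : Type*) [CommRing R] (Lin : Set R)
    (N : Type*) [AddCommGroup N] [Module R N] : Prop :=
  ∃ (κ : ℕ → Type) (d : ∀ i : ℕ, (κ (i + 1) →₀ R) →ₗ[R] (κ i →₀ R))
    (ε : (κ 0 →₀ R) →ₗ[R] N),
      Function.Surjective ε ∧
      LinearMap.range (d 0) = LinearMap.ker ε ∧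
      (∀ i, LinearMap.range (d (i + 1)) = LinearMap.ker (d i)) ∧
      (∀ i (a : κ (i + 1)) (b : κ i), d i (Finsupp.single a 1) b ∈ Lin)

/-! ### The splitting `S = A[y]`:
`S = k[x_1, …, x_{n-1}, y]` is `MvPolynomial (Fin (nA + 1)) k` with `y` the last
variable and `A = k[x_1, …, x_{n-1}] = MvPolynomial (Fin nA) k`, included in `S` via
`Fin.castSucc`.  The weights are `w : Fin (nA + 1) → ℤ`, with `d = w (Fin.last nA)` the
degree of `y`. -/

/-- The last variable `y` of `S = A[y]`. -/
def yvar (k : Type) [Field k] (nA : ℕ) : MvPolynomial (Fin (nA + 1)) k :=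
  MvPolynomial.X (Fin.last nA)

/-- The `S`-submodule `A_{≥c}·(y^i)` of `S = A[y]` generated by the products `a·y^i`
with `a ∈ A` homogeneous of degree `≥ c`. -/
def AyPow (k : Type) [Field k] (nA : ℕ) (w : Fin (nA + 1) → ℤ) (c : ℤ) (i : ℕ) :
    Submodule (MvPolynomial (Fin (nA + 1)) k) (MvPolynomial (Fin (nA + 1)) k) :=
  Submodule.span (MvPolynomial (Fin (nA + 1)) k)
    ((fun a => MvPolynomial.rename Fin.castSucc a * (yvar k nA) ^ i) ''
      (trunc k nA (fun l => w (Fin.castSucc l)) c : Set (MvPolynomial (Fin nA) k)))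

/-- The filtration `M^{(i)} = M ∩ (y^i)` of the truncation `M = S_{≥e}`. -/
def Mfilt (k : Type) [Field k] (nA : ℕ) (w : Fin (nA + 1) → ℤ) (e : ℤ) (i : ℕ) :
    Submodule (MvPolynomial (Fin (nA + 1)) k) (MvPolynomial (Fin (nA + 1)) k) :=
  trunc k (nA + 1) w e ⊓ Submodule.span _ {yvar k nA ^ i}

/-- `⌈e/d⌉` as a natural number. -/
def ceilDiv (e d : ℤ) : ℕ := (⌈(e : ℚ) / (d : ℚ)⌉).toNat


/-
`S_{≥e}` is spanned by the monomials `a·y^j` of degree `≥ e`, with `a` a monomial of `A`.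
If `j ≥ N` such a monomial lies in `(y^N)`; otherwise `deg a ≥ e - j·d`, so it lies in
`A_{≥e-jd}·(y^j)`. Conversely, degrees add under multiplication, and `y^N` has degree
`N·d ≥ e`.
-/

theorem Finsupp.weight_mapDomain {σ τ M : Type*} [AddCommMonoid M] (w : τ → M) (f : σ → τ)
    (u : σ →₀ ℕ) : Finsupp.weight w (u.mapDomain f) = Finsupp.weight (w ∘ f) u := by
  classical
  simp only [Finsupp.weight_apply]
  exact Finsupp.sum_mapDomain_index (fun _ => zero_smul ℕ _) fun b _ _ => add_smul _ _ (w b)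

theorem Finsupp.mapDomain_castSucc_comapDomain_add_single_last {n : ℕ} {M : Type*}
    [AddCommMonoid M] (α : Fin (n + 1) →₀ M) :
    (α.comapDomain Fin.castSucc (Fin.castSucc_injective n).injOn).mapDomain Fin.castSucc +
      Finsupp.single (Fin.last n) (α (Fin.last n)) = α := by
  ext i
  induction i using Fin.lastCases with
  | last =>
    rw [Finsupp.add_apply, Finsupp.mapDomain_of_notMem_range _ _ fun ⟨x, hx⟩ =>
      (Fin.castSucc_lt_last x).ne hx, Finsupp.single_eq_same, zero_add]
  | cast i =>
    rw [Finsupp.add_apply, Finsupp.mapDomain_apply (Fin.castSucc_injective n),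
      Finsupp.single_eq_of_ne (Fin.castSucc_lt_last i).ne, add_zero,
      Finsupp.comapDomain_apply]

theorem MvPolynomial.IsWeightedHomogeneous.rename {R σ τ M : Type*} [CommSemiring R]
    [AddCommMonoid M] {w : τ → M} (f : σ → τ) {p : MvPolynomial σ R} {m : M}
    (hp : IsWeightedHomogeneous (w ∘ f) p m) : IsWeightedHomogeneous w (rename f p) m := by
  intro d hd
  obtain ⟨u, rfl, hu⟩ := coeff_rename_ne_zero _ _ _ hd
  rw [Finsupp.weight_mapDomain]
  exact hp hu

section Trunc

variable {k : Type} [Field k] {n : ℕ} {w : Fin n → ℤ}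

theorem trunc_antitone : Antitone (trunc k n w) := fun _ _ h =>
  Submodule.span_mono <| Set.biUnion_mono (fun _ hm => h.trans hm) fun _ _ => le_rfl

theorem mem_trunc_of_isWeightedHomogeneous {e m : ℤ} {p : MvPolynomial (Fin n) k}
    (hm : e ≤ m) (hp : IsWeightedHomogeneous w p m) : p ∈ trunc k n w e :=
  Submodule.subset_span <| Set.mem_iUnion₂.mpr ⟨m, hm, hp⟩

theorem trunc_le_of_monomial_mem {e : ℤ}
    {P : Submodule (MvPolynomial (Fin n) k) (MvPolynomial (Fin n) k)}
    (h : ∀ α c, e ≤ Finsupp.weight w α → monomial α c ∈ P) : trunc k n w e ≤ P := by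
  refine Submodule.span_le.mpr <| Set.iUnion₂_subset fun m hm p hp => ?_
  rw [SetLike.mem_coe, p.as_sum]
  exact P.sum_mem fun α hα => h α _ (hm.trans_eq (hp (mem_support_iff.mp hα)).symm)

theorem rename_mul_mem_trunc {m : ℕ} (f : Fin m → Fin n) {c d : ℤ}
    {p : MvPolynomial (Fin m) k} (hp : p ∈ trunc k m (w ∘ f) c)
    {q : MvPolynomial (Fin n) k} (hq : IsWeightedHomogeneous w q d) :
    rename f p * q ∈ trunc k n w (c + d) := by
  induction hp using Submodule.span_induction with
  | mem x hx =>
    obtain ⟨m, hm, hx⟩ := Set.mem_iUnion₂.mp hx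
    exact mem_trunc_of_isWeightedHomogeneous (by linarith) ((hx.rename f).mul hq)
  | zero => simp
  | add x y _ _ hx hy => simpa [add_mul] using add_mem hx hy
  | smul a x _ hx => simpa [mul_assoc] using Submodule.smul_mem _ (rename f a) hx

end Trunc

section SplitLastVariable

variable {k : Type} [Field k] {nA : ℕ} {w : Fin (nA + 1) → ℤ}

theorem isWeightedHomogeneous_yvar_pow (i : ℕ) :
    IsWeightedHomogeneous w (yvar k nA ^ i) (i * w (Fin.last nA)) := by
  have h := (isWeightedHomogeneous_X k w (Fin.last nA)).pow i
  rwa [nsmul_eq_mul] at h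

theorem ayPow_le_trunc {c e : ℤ} {i : ℕ} (h : e ≤ c + i * w (Fin.last nA)) :
    AyPow k nA w c i ≤ trunc k (nA + 1) w e :=
  Submodule.span_le.mpr <| Set.image_subset_iff.mpr fun _ ha =>
    trunc_antitone h (rename_mul_mem_trunc Fin.castSucc ha (isWeightedHomogeneous_yvar_pow i))

theorem span_yvar_pow_le_trunc {e : ℤ} {N : ℕ} (h : e ≤ N * w (Fin.last nA)) :
    Submodule.span (MvPolynomial (Fin (nA + 1)) k) {yvar k nA ^ N} ≤ trunc k (nA + 1) w e :=
  (Submodule.span_singleton_le_iff_mem _ _).mpr <|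
    mem_trunc_of_isWeightedHomogeneous h (isWeightedHomogeneous_yvar_pow N)

theorem monomial_mem_span_yvar_pow {α : Fin (nA + 1) →₀ ℕ} {N : ℕ} (c : k)
    (h : N ≤ α (Fin.last nA)) :
    monomial α c ∈ Submodule.span (MvPolynomial (Fin (nA + 1)) k) {yvar k nA ^ N} := by
  refine Submodule.mem_span_singleton.mpr ⟨monomial (α - Finsupp.single (Fin.last nA) N) c, ?_⟩
  rw [smul_eq_mul, yvar, X_pow_eq_monomial, monomial_mul, mul_one,
    tsub_add_cancel_of_le (Finsupp.single_le_iff.mpr h)]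

theorem monomial_mem_ayPow {e : ℤ} {α : Fin (nA + 1) →₀ ℕ} (c : k)
    (h : e ≤ Finsupp.weight w α) :
    monomial α c ∈ AyPow k nA w (e - w (Fin.last nA) * α (Fin.last nA)) (α (Fin.last nA)) := by
  obtain ⟨α', hα⟩ : ∃ α' : Fin nA →₀ ℕ,
      α'.mapDomain Fin.castSucc + Finsupp.single (Fin.last nA) (α (Fin.last nA)) = α :=
    ⟨_, Finsupp.mapDomain_castSucc_comapDomain_add_single_last α⟩
  have hweight : Finsupp.weight w α =
      Finsupp.weight (fun l => w (Fin.castSucc l)) α' + α (Fin.last nA) * w (Fin.last nA) := by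
    conv_lhs => rw [← hα]
    rw [map_add, Finsupp.weight_mapDomain, Finsupp.weight_single, nsmul_eq_mul]
    rfl
  refine Submodule.subset_span ⟨monomial α' c, ?_, ?_⟩
  · exact mem_trunc_of_isWeightedHomogeneous (by linarith)
      (isWeightedHomogeneous_monomial _ _ _ rfl)
  · simp only [rename_monomial, yvar, X_pow_eq_monomial, monomial_mul, mul_one, hα]

end SplitLastVariable

theorem le_ceilDiv_mul {e d : ℤ} (hd : 0 < d) : e ≤ ceilDiv e d * d := by
  have hq : (e : ℚ) ≤ ⌈(e : ℚ) / d⌉ * d :=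
    (div_le_iff₀ (by exact_mod_cast hd)).mp (Int.le_ceil _)
  have hz : e ≤ ⌈(e : ℚ) / d⌉ * d := by exact_mod_cast hq
  exact hz.trans (mul_le_mul_of_nonneg_right (Int.self_le_toNat _) hd.le)

theorem truncation_decomposition_general (k : Type) [Field k] (nA : ℕ)
    (w : Fin (nA + 1) → ℤ) (hw : ∀ i, 0 < w i)
    (e : ℤ) :
    trunc k (nA + 1) w e =
      (⨆ i ∈ Finset.range (ceilDiv e (w (Fin.last nA))),
        AyPow k nA w (e - w (Fin.last nA) * i) i) ⊔
      Submodule.span _ {yvar k nA ^ (ceilDiv e (w (Fin.last nA)))} := by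
  set N := ceilDiv e (w (Fin.last nA))
  refine le_antisymm (trunc_le_of_monomial_mem fun α c hα => ?_) ?_
  · rcases lt_or_ge (α (Fin.last nA)) N with hj | hj
    · exact Submodule.mem_sup_left <| Submodule.mem_iSup_of_mem _ <|
        Submodule.mem_iSup_of_mem (Finset.mem_range.mpr hj) (monomial_mem_ayPow c hα)
    · exact Submodule.mem_sup_right (monomial_mem_span_yvar_pow c hj)
  · refine sup_le (iSup₂_le fun i _ => ayPow_le_trunc (by linarith)) ?_
    exact span_yvar_pow_le_trunc (le_ceilDiv_mul (hw _))

/-- For `S = A[y]` with `deg y = d ≥ deg x_i` and `e > 0`, `N = ⌈e/d⌉`, the truncation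
decomposes as
`S_{≥e} = A_{≥e} + A_{≥e-d}·(y) + ⋯ + A_{≥e-(N-1)d}·(y^{N-1}) + (y^N)`. -/
theorem truncation_decomposition (k : Type) [Field k] (nA : ℕ)
    (w : Fin (nA + 1) → ℤ) (hw : ∀ i, 0 < w i)
    (hd : ∀ l : Fin nA, w (Fin.castSucc l) ≤ w (Fin.last nA))
    (e : ℤ) (he : 0 < e) :
    trunc k (nA + 1) w e =
      (⨆ i ∈ Finset.range (ceilDiv e (w (Fin.last nA))),
        AyPow k nA w (e - w (Fin.last nA) * i) i) ⊔
      Submodule.span _ {yvar k nA ^ (ceilDiv e (w (Fin.last nA)))} :=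
  truncation_decomposition_general k nA w hw e
end
end

section
/- Let S = A[y] where A = k[x_1,…,x_{n-1}] is a positively Z-graded polynomial ring, deg(y) = d ≥ deg(x_i) for all i, and m is the maximal ideal of S. Fix e > 0, set M = S_{≥e}, M^{(i)} = M ∩ (y^i), N = ⌈e/d⌉, and A^{(i)} = A_{≥e−di}·S/(y). For 0 ≤ i < N let α_i : M^{(i)} → A^{(i)} be the canonical surjection with kernel M^{(i+1)}. Then for every j ≥ 0 the induced sequence 0 → m^j M^{(i+1)} → m^j M^{(i)} → m^j A^{(i)} → 0 is exact; equivalently, the kernel of the surjection m^j M^{(i)} → m^j A^{(i)} induced by α_i equals m^j M^{(i+1)} (i.e., m^j·ker(α_i)). -/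
/-!
Background setup.  `MvPolynomial (Fin n) k` is the polynomial ring `S = k[x_1, …, x_n]`
over the field `k`, graded (possibly nonstandardly) by weights `w : Fin n → ℤ` with
`0 < w i`, with graded maximal ideal `m = maxIdeal k n = (x_1, …, x_n)`.

* `trunc k n w e` is the truncation `S_{≥e} = ⊕_{i ≥ e} S_i`, an `S`-submodule of `S`
  (realized as the `S`-span of the weighted-homogeneous elements of weighted degree `≥ e`;
  for positive weights this span is exactly `⊕_{i ≥ e} S_i`).
* `GrRing k n` is the associated graded ring `gr_m(S) = ⊕_{i≥0} m^i/m^{i+1}`, realized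
  as the quotient `Rees(m) ⧸ m·Rees(m)` of the Rees algebra of `m`; it is a standard
  graded polynomial ring over `k = S/m`.
* `GrMod k n M` is the associated graded module `gr_m(M) = ⊕_{i≥0} m^i M/m^{i+1} M` of an
  `S`-module `M`, realized as the quotient of the Rees module `⊕_i m^i M` by
  `m·(⊕_i m^i M)`; it is a module over `gr_m(S) = GrRing k n`.
* `grDeg1 k n` is the degree-one component `m/m²` of `gr_m(S)`, i.e. the set of linear
  forms of the standard graded ring `gr_m(S)`.
* `HasLinearResolution R Lin N` says that `N` admits a free resolution
  `⋯ → F_{i+1} → F_i → ⋯ → F_0 → N → 0` in which every differential is given by a matrix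
  all of whose entries lie in the set `Lin` of linear forms.  For a module generated in
  degree `0` over a standard graded `k`-algebra `R` (with `Lin = R_1`) this is the usual
  notion of a linear resolution: a graded free resolution `F_•` with `F_i` generated in
  degree `i`.
-/

set_option synthInstance.maxHeartbeats 1000000
set_option maxHeartbeats 1000000

noncomputable section
open MvPolynomial

variable (k : Type) [Field k] (n : ℕ) (M : Type) [AddCommGroup M]
  [Module (MvPolynomial (Fin n) k) M]

/-!
All ideals involved are monomial ideals: `m^j`, the truncation `S_{≥e}` and `(y^c)` consist of
the polynomials supported on an upper set of exponents, and products and intersections of such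
ideals correspond to sums and intersections of exponent sets. The claim is thereby reduced to
exponents, where the one real step is an exchange: let `a = u + v` with `deg u ≥ j`,
`wt v ≥ e`, `v_y = i` and `a_y ≥ i + 1`. Since `i·d < e ≤ wt v`, the monomial of `v` involves
some other variable `x_s`; moving one factor `y` from `u` to `v` and one factor `x_s` back keeps
`deg u`, does not lower `wt v` (as `w_s ≤ d`), and raises `v_y` to `i + 1`.
-/

open Pointwise in
theorem IsUpperSet.add_left_of_canonicallyOrderedAdd {α : Type*} [AddCommMonoid α]
    [PartialOrder α] [CanonicallyOrderedAdd α] {s t : Set α} (ht : IsUpperSet t) :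
    IsUpperSet (s + t) := by
  rintro _ b hab ⟨x, hx, y, hy, rfl⟩
  obtain ⟨c, rfl⟩ := exists_add_of_le hab
  exact ⟨x, hx, y + c, ht le_self_add hy, (add_assoc x y c).symm⟩

namespace Finsupp

variable {σ : Type*} {w : σ → ℤ} {t : σ}

theorem isUpperSet_setOf_le_weight (hw : ∀ s, 0 ≤ w s) (e : ℤ) :
    IsUpperSet {a : σ →₀ ℕ | e ≤ weight w a} := by
  rintro a _ hab (ha : e ≤ weight w a)
  obtain ⟨c, rfl⟩ := exists_add_of_le hab
  have hc : 0 ≤ weight w c := by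
    rw [weight_apply, Finsupp.sum]
    exact Finset.sum_nonneg fun s _ => nsmul_nonneg (hw s) _
  show e ≤ weight w (a + c)
  rw [map_add]
  linarith

theorem isUpperSet_setOf_le_apply (t : σ) (c : ℕ) : IsUpperSet {a : σ →₀ ℕ | c ≤ a t} :=
  fun _ _ hab ha => le_trans ha (hab t)

theorem exists_ne_apply_ne_zero_of_lt_weight {y : σ →₀ ℕ} (h : y t • w t < weight w y) :
    ∃ s ≠ t, y s ≠ 0 := by
  by_contra! hy
  have hyt : y = single t (y t) := by
    ext s
    by_cases hs : s = t
    · simp [hs]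
    · simp [hy s hs, single_eq_of_ne hs]
  have := congrArg (weight w) hyt
  rw [weight_single] at this
  exact h.ne this.symm

open Pointwise in
theorem preimage_degree_add_inter_setOf_succ_le_apply (hmax : ∀ s, w s ≤ w t) {e : ℤ} {i : ℕ}
    (hie : i * w t < e) (j : ℕ) :
    (degree ⁻¹' Set.Ici j + ({a | e ≤ weight w a} ∩ {a | i ≤ a t})) ∩ {a | i + 1 ≤ a t} =
      degree ⁻¹' Set.Ici j + ({a | e ≤ weight w a} ∩ {a | i + 1 ≤ a t}) := by
  apply subset_antisymm
  · rintro _ ⟨⟨x, hx, y, ⟨hye, hyi⟩, rfl⟩, hsucc⟩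
    simp only [Set.mem_preimage, Set.mem_Ici, Set.mem_ofPred_eq, add_apply] at hx hye hyi hsucc
    rcases Nat.lt_or_ge (y t) (i + 1) with hyt | hyt
    swap
    · exact ⟨x, hx, y, ⟨hye, hyt⟩, rfl⟩
    obtain ⟨s, hst, hys⟩ : ∃ s ≠ t, y s ≠ 0 := by
      refine exists_ne_apply_ne_zero_of_lt_weight (lt_of_lt_of_le ?_ hye)
      rwa [show y t = i by omega, nsmul_eq_mul]
    obtain ⟨x₀, rfl⟩ : ∃ x₀, x = x₀ + single t 1 :=
      le_iff_exists_add'.mp (single_le_iff.mpr (by omega))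
    obtain ⟨y₀, rfl⟩ : ∃ y₀, y = y₀ + single s 1 :=
      le_iff_exists_add'.mp (single_le_iff.mpr (Nat.one_le_iff_ne_zero.mpr hys))
    refine ⟨x₀ + single s 1, ?_, y₀ + single t 1, ⟨?_, ?_⟩, by ac_rfl⟩
    · simpa [degree_single] using hx
    · simp only [Set.mem_ofPred_eq, map_add, weight_single, one_smul] at hye ⊢
      linarith [hmax s]
    · simp only [Set.mem_ofPred_eq, add_apply, single_eq_same, single_eq_of_ne' hst] at hyi ⊢
      omega
  · rintro _ ⟨x, hx, y, ⟨hye, hyi⟩, rfl⟩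
    exact ⟨⟨x, hx, y, ⟨hye, Nat.le_of_succ_le hyi⟩, rfl⟩, le_add_left (α := ℕ) hyi⟩

end Finsupp

namespace MvPolynomial

variable {σ R : Type*} [CommSemiring R]

theorem mem_restrictSupportIdeal_iff {s : Set (σ →₀ ℕ)} {hs : IsUpperSet s}
    {p : MvPolynomial σ R} : p ∈ restrictSupportIdeal R s hs ↔ ↑p.support ⊆ s :=
  Iff.rfl

theorem restrictSupportIdeal_inf {s t : Set (σ →₀ ℕ)} (hs : IsUpperSet s) (ht : IsUpperSet t) :
    restrictSupportIdeal R s hs ⊓ restrictSupportIdeal R t ht =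
      restrictSupportIdeal R (s ∩ t) (hs.inter ht) := by
  ext p
  exact Set.subset_inter_iff.symm

open Pointwise in
theorem restrictSupportIdeal_mul {s t : Set (σ →₀ ℕ)} (hs : IsUpperSet s) (ht : IsUpperSet t) :
    restrictSupportIdeal R s hs * restrictSupportIdeal R t ht =
      restrictSupportIdeal R (s + t) ht.add_left_of_canonicallyOrderedAdd :=
  Submodule.restrictScalars_injective R _ _ (restrictSupport_add (R := R) s t).symm

theorem span_X_pow_eq_restrictSupportIdeal (t : σ) (c : ℕ) :
    Ideal.span {X t ^ c} =
      restrictSupportIdeal R {a | c ≤ a t} (Finsupp.isUpperSet_setOf_le_apply t c) := by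
  ext p
  rw [X_pow_eq_monomial, ← Set.image_singleton (f := (monomial · (1 : R))),
    mem_ideal_span_monomial_image]
  simp [mem_restrictSupportIdeal_iff, Set.subset_def]

end MvPolynomial

theorem trunc_eq_restrictSupportIdeal (k : Type) [Field k] (n : ℕ) {w : Fin n → ℤ}
    (hw : ∀ s, 0 ≤ w s) (e : ℤ) :
    trunc k n w e = restrictSupportIdeal k {a | e ≤ Finsupp.weight w a}
      (Finsupp.isUpperSet_setOf_le_weight hw e) := by
  apply le_antisymm
  · rw [trunc, Submodule.span_le]
    intro p hp
    simp only [Set.mem_iUnion, SetLike.mem_coe, mem_weightedHomogeneousSubmodule] at hp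
    obtain ⟨d, hed, hp⟩ := hp
    intro a ha
    exact hed.trans (hp (mem_support_iff.mp ha)).ge
  · intro p hp
    rw [p.as_sum]
    refine Submodule.sum_mem _ fun a ha => Submodule.subset_span ?_
    exact Set.mem_biUnion (x := Finsupp.weight w a) (hp ha)
      (isWeightedHomogeneous_monomial _ _ _ rfl)

theorem Mfilt_eq_restrictSupportIdeal (k : Type) [Field k] (nA : ℕ) {w : Fin (nA + 1) → ℤ}
    (hw : ∀ s, 0 ≤ w s) (e : ℤ) (i : ℕ) :
    Mfilt k nA w e i = restrictSupportIdeal k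
      ({a | e ≤ Finsupp.weight w a} ∩ {a | i ≤ a (Fin.last nA)})
      ((Finsupp.isUpperSet_setOf_le_weight hw e).inter
        (Finsupp.isUpperSet_setOf_le_apply _ i)) := by
  rw [Mfilt, trunc_eq_restrictSupportIdeal k _ hw, yvar, ← Ideal.span,
    span_X_pow_eq_restrictSupportIdeal, restrictSupportIdeal_inf]

theorem mul_lt_of_lt_ceilDiv {e d : ℤ} (hd : 0 < d) {i : ℕ} (hi : i < ceilDiv e d) :
    i * d < e := by
  have hlt : (i : ℚ) < e / d := Int.lt_ceil.mp (Int.lt_toNat.mp hi)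
  exact_mod_cast (lt_div_iff₀ (by exact_mod_cast hd)).mp hlt

theorem pow_smul_filtration_exact_general (k : Type) [Field k] (nA : ℕ)
    (w : Fin (nA + 1) → ℤ) (hw : ∀ i, 0 < w i)
    (hd : ∀ l : Fin nA, w (Fin.castSucc l) ≤ w (Fin.last nA))
    (e : ℤ) (i : ℕ) (hi : i < ceilDiv e (w (Fin.last nA))) (j : ℕ) :
    ((maxIdeal k (nA + 1)) ^ j • Mfilt k nA w e i) ⊓
        Submodule.span (MvPolynomial (Fin (nA + 1)) k) {yvar k nA ^ (i + 1)} =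
      (maxIdeal k (nA + 1)) ^ j • Mfilt k nA w e (i + 1) := by
  have hw₀ : ∀ s, 0 ≤ w s := fun s => (hw s).le
  have hmax : ∀ s, w s ≤ w (Fin.last nA) := Fin.lastCases le_rfl hd
  have hie : i * w (Fin.last nA) < e := mul_lt_of_lt_ceilDiv (hw _) hi
  rw [Ideal.smul_eq_mul, Ideal.smul_eq_mul, maxIdeal, ← idealOfVars, pow_idealOfVars,
    Mfilt_eq_restrictSupportIdeal k nA hw₀, Mfilt_eq_restrictSupportIdeal k nA hw₀, yvar,
    ← Ideal.span, span_X_pow_eq_restrictSupportIdeal, restrictSupportIdeal_mul,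
    restrictSupportIdeal_mul, restrictSupportIdeal_inf]
  congr 1
  exact Finsupp.preimage_degree_add_inter_setOf_succ_le_apply hmax hie j

/-- For `0 ≤ i < N = ⌈e/d⌉` and every `j ≥ 0`, the sequence
`0 → m^j M^{(i+1)} → m^j M^{(i)} → m^j A^{(i)} → 0` induced by
`α_i : M^{(i)} → A^{(i)} = M^{(i)}/M^{(i+1)}` is exact.  Equivalently (as stated here),
the kernel of the induced surjection `m^j M^{(i)} → m^j A^{(i)}` — namely
`m^j M^{(i)} ∩ (y^{i+1})` — equals `m^j M^{(i+1)} = m^j · ker α_i`. -/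
theorem pow_smul_filtration_exact (k : Type) [Field k] (nA : ℕ)
    (w : Fin (nA + 1) → ℤ) (hw : ∀ i, 0 < w i)
    (hd : ∀ l : Fin nA, w (Fin.castSucc l) ≤ w (Fin.last nA))
    (e : ℤ) (he : 0 < e) (i : ℕ) (hi : i < ceilDiv e (w (Fin.last nA))) (j : ℕ) :
    ((maxIdeal k (nA + 1)) ^ j • Mfilt k nA w e i) ⊓
        Submodule.span (MvPolynomial (Fin (nA + 1)) k) {yvar k nA ^ (i + 1)} =
      (maxIdeal k (nA + 1)) ^ j • Mfilt k nA w e (i + 1) :=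
  pow_smul_filtration_exact_general k nA w hw hd e i hi j
end
end
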